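/- arXiv:math/0612461 — 2 statements merged into one kernel-verified Lean document; each statement's English description precedes it below -/
import Mathlib

section
/- The spectral radius of the complete graph K_n with one edge removed equals (n - 3 + sqrt(n² + 2n - 7))/2. -/
/-!
The adjacency matrix is `A = J - I - E_ab - E_ba`. If `A v = x v` and `s = ∑ i, v i`, this says
`(x + 1) v i = s` for `i ∉ {a, b}` and `(x + 1) v a + v b = s = (x + 1) v b + v a`. For `x > 0`
this forces `v a = v b`, and summing over all vertices gives `x ^ 2 = (n - 3) x + 2 (n - 2)`
unless `v = 0`. So every eigenvalue is either `≤ 0` or a root of this quadratic, and its larger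
root `μ ≥ 0` is an eigenvalue itself, with eigenvector `μ + 1` on `{a, b}` and `μ + 2` elsewhere.
-/

/-- The spectral radius (largest adjacency eigenvalue) of a graph. -/
noncomputable def graphMu {n : ℕ} (G : SimpleGraph (Fin n)) [DecidableRel G.Adj] : ℝ :=
  sSup {x : ℝ | Module.End.HasEigenvalue (Matrix.toLin' (G.adjMatrix ℝ)) x}

open Matrix

theorem Matrix.hasEigenvalue_toLin'_iff {ι R : Type*} [Fintype ι] [DecidableEq ι] [CommRing R]
    (A : Matrix ι ι R) (μ : R) :
    Module.End.HasEigenvalue (toLin' A) μ ↔ ∃ v, v ≠ 0 ∧ A *ᵥ v = μ • v := by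
  constructor
  · intro h
    obtain ⟨v, hv⟩ := h.exists_hasEigenvector
    exact ⟨v, hv.2, by simpa using hv.apply_eq_smul⟩
  · rintro ⟨v, hv0, hv⟩
    exact Module.End.hasEigenvalue_of_hasEigenvector
      ⟨by rwa [Module.End.mem_eigenspace_iff, toLin'_apply], hv0⟩

noncomputable def largerRoot (p q : ℝ) : ℝ := (p + √(p ^ 2 + 4 * q)) / 2

theorem largerRoot_sq {p q : ℝ} (h : 0 ≤ p ^ 2 + 4 * q) :
    largerRoot p q ^ 2 = p * largerRoot p q + q := by
  unfold largerRoot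
  linear_combination Real.sq_sqrt h / 4

theorem largerRoot_nonneg {p q : ℝ} (hq : 0 ≤ q) : 0 ≤ largerRoot p q := by
  have : |p| ≤ √(p ^ 2 + 4 * q) := by
    rw [← Real.sqrt_sq_eq_abs]
    exact Real.sqrt_le_sqrt (by linarith)
  unfold largerRoot
  linarith [neg_abs_le p]

theorem le_largerRoot {p q x : ℝ} (h : x ^ 2 = p * x + q) : x ≤ largerRoot p q := by
  have : 2 * x - p ≤ √(p ^ 2 + 4 * q) := by
    rw [show p ^ 2 + 4 * q = (2 * x - p) ^ 2 by linear_combination -4 * h, Real.sqrt_sq_eq_abs]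
    exact le_abs_self _
  unfold largerRoot
  linarith

namespace CompleteMinusEdge

variable {V : Type*} [Fintype V] [DecidableEq V] {G : SimpleGraph V} [DecidableRel G.Adj]
  {a b : V}

theorem adjMatrix_mulVec_apply {R : Type*} [CommRing R] (hab : a ≠ b)
    (hG : ∀ u v, G.Adj u v ↔ u ≠ v ∧ s(u, v) ≠ s(a, b)) (v : V → R) (i : V) :
    (G.adjMatrix R *ᵥ v) i =
      ∑ j, v j - v i - (if i = a then v b else 0) - (if i = b then v a else 0) := by
  have entry (j : V) : (if G.Adj i j then v j else 0) = v j - (if i = j then v j else 0) -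
      (if i = a ∧ j = b then v j else 0) - (if i = b ∧ j = a then v j else 0) := by
    simp only [hG, ne_eq, Sym2.eq_iff]
    split_ifs <;> grind
  simp only [mulVec, dotProduct, SimpleGraph.adjMatrix_apply, ite_mul, one_mul, zero_mul, entry,
    Finset.sum_sub_distrib, ite_and]
  simp

theorem sq_eq_of_mulVec_eq_smul (hab : a ≠ b)
    (hG : ∀ u v, G.Adj u v ↔ u ≠ v ∧ s(u, v) ≠ s(a, b)) {v : V → ℝ} {x : ℝ} (hv0 : v ≠ 0)
    (hv : G.adjMatrix ℝ *ᵥ v = x • v) (hx : 0 < x) :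
    x ^ 2 = (Fintype.card V - 3) * x + 2 * (Fintype.card V - 2) := by
  set s := ∑ j, v j
  have eigen (i : V) :
      x * v i = s - v i - (if i = a then v b else 0) - (if i = b then v a else 0) := by
    rw [← adjMatrix_mulVec_apply hab hG, hv, Pi.smul_apply, smul_eq_mul]
  have off (i : V) (hi : i ≠ a ∧ i ≠ b) : (x + 1) * v i = s := by
    linear_combination (by simpa [hi.1, hi.2] using eigen i : x * v i = s - v i)
  have ha : x * v a = s - v a - v b := by simpa [hab] using eigen a
  have hb : x * v b = s - v b - v a := by simpa [hab.symm] using eigen b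
  have hvab : v a = v b := mul_left_cancel₀ hx.ne' (by linarith)
  have hvs : (x + 2) * v a = s := by linear_combination ha + hvab
  have hs : s ≠ 0 := by
    intro hs
    have hva : v a = 0 := (mul_eq_zero.mp (hvs.trans hs)).resolve_left (by linarith)
    refine hv0 (funext fun i => ?_)
    by_cases hia : i = a
    · rw [hia, hva, Pi.zero_apply]
    by_cases hib : i = b
    · rw [hib, ← hvab, hva, Pi.zero_apply]
    exact (mul_eq_zero.mp ((off i ⟨hia, hib⟩).trans hs)).resolve_left (by linarith)
  have hsum : ∑ i, ((x + 1) * (x + 2) * v i - (x + 2) * s) = -s + -s := by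
    rw [Fintype.sum_eq_add a b hab fun i hi => by linear_combination (x + 2) * off i hi]
    linear_combination 2 * (x + 1) * hvs - (x + 1) * (x + 2) * hvab
  rw [Finset.sum_sub_distrib, ← Finset.mul_sum, Finset.sum_const, Finset.card_univ, nsmul_eq_mul]
    at hsum
  refine mul_right_cancel₀ hs ?_
  linear_combination hsum

def perronVector (a b : V) (x : ℝ) : V → ℝ := fun i => if i = a ∨ i = b then x + 1 else x + 2

theorem adjMatrix_mulVec_perronVector (hab : a ≠ b)
    (hG : ∀ u v, G.Adj u v ↔ u ≠ v ∧ s(u, v) ≠ s(a, b)) {x : ℝ}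
    (hx : x ^ 2 = (Fintype.card V - 3) * x + 2 * (Fintype.card V - 2)) :
    G.adjMatrix ℝ *ᵥ perronVector a b x = x • perronVector a b x := by
  have hsum : ∑ i, perronVector a b x i = (x + 1) * (x + 2) := by
    have h : ∑ i, (perronVector a b x i - (x + 2)) = -1 + -1 := by
      rw [Fintype.sum_eq_add a b hab fun i hi => by simp [perronVector, hi.1, hi.2]]
      norm_num [perronVector]
    rw [Finset.sum_sub_distrib, Finset.sum_const, Finset.card_univ, nsmul_eq_mul] at h
    linear_combination h - hx
  funext i
  rw [adjMatrix_mulVec_apply hab hG, hsum, Pi.smul_apply, smul_eq_mul]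
  by_cases hia : i = a
  · simp only [perronVector, hia, hab, or_false, ↓reduceIte, or_true, sub_zero]
    ring
  by_cases hib : i = b
  · simp only [perronVector, hib, hab.symm, or_true, ↓reduceIte, sub_zero, true_or]
    ring
  simp only [perronVector, hia, hib, or_self, ↓reduceIte, sub_zero]
  ring

theorem isGreatest_eigenvalues (hab : a ≠ b)
    (hG : ∀ u v, G.Adj u v ↔ u ≠ v ∧ s(u, v) ≠ s(a, b)) :
    IsGreatest {x : ℝ | Module.End.HasEigenvalue (toLin' (G.adjMatrix ℝ)) x}
      (largerRoot (Fintype.card V - 3) (2 * (Fintype.card V - 2))) := by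
  set μ := largerRoot (Fintype.card V - 3) (2 * (Fintype.card V - 2))
  have hcard : (2 : ℝ) ≤ Fintype.card V := by
    exact_mod_cast Fintype.one_lt_card_iff.mpr ⟨a, b, hab⟩
  have hμ0 : 0 ≤ μ := largerRoot_nonneg (by linarith)
  have hμ : μ ^ 2 = (Fintype.card V - 3) * μ + 2 * (Fintype.card V - 2) :=
    largerRoot_sq (by nlinarith)
  constructor
  · refine (hasEigenvalue_toLin'_iff _ _).2
      ⟨perronVector a b μ, fun h => ?_, adjMatrix_mulVec_perronVector hab hG hμ⟩
    have := congrFun h a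
    simp only [perronVector, true_or, if_true, Pi.zero_apply] at this
    linarith
  · intro x hx
    obtain ⟨v, hv0, hv⟩ := (hasEigenvalue_toLin'_iff _ _).1 hx
    rcases le_or_gt x 0 with hx0 | hx0
    · linarith
    · exact le_largerRoot (sq_eq_of_mulVec_eq_smul hab hG hv0 hv hx0)

end CompleteMinusEdge

theorem complete_minus_edge_mu_general {n : ℕ} (G : SimpleGraph (Fin n))
    [DecidableRel G.Adj] (a b : Fin n) (hab : a ≠ b)
    (hG : ∀ u v : Fin n, G.Adj u v ↔ (u ≠ v ∧ s(u, v) ≠ s(a, b))) :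
    graphMu G = ((n : ℝ) - 3 + Real.sqrt ((n : ℝ) ^ 2 + 2 * n - 7)) / 2 := by
  have h := (CompleteMinusEdge.isGreatest_eigenvalues hab hG).csSup_eq
  rw [Fintype.card_fin] at h
  rw [graphMu, h, largerRoot]
  ring_nf

theorem complete_minus_edge_mu {n : ℕ} (hn : 2 ≤ n) (G : SimpleGraph (Fin n))
    [DecidableRel G.Adj] (a b : Fin n) (hab : a ≠ b)
    (hG : ∀ u v : Fin n, G.Adj u v ↔ (u ≠ v ∧ s(u, v) ≠ s(a, b))) :
    graphMu G = ((n : ℝ) - 3 + Real.sqrt ((n : ℝ) ^ 2 + 2 * n - 7)) / 2 :=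
  complete_minus_edge_mu_general G a b hab hG
end

section
/- Let n = 2k be even with n ≥ 4, and let G be the complement of a (k-1)-matching in K_n (so G has n-2 vertices of degree n-2 and 2 vertices of degree n-1), with m edges. Then μ(G) - 2m/n > 1/(2m + 2n). -/
open Finset Matrix

theorem le_graphMu_of_hasEigenvalue {n : ℕ} {G : SimpleGraph (Fin n)} [DecidableRel G.Adj]
    {μ : ℝ} (hμ : Module.End.HasEigenvalue (toLin' (G.adjMatrix ℝ)) μ) :
    μ ≤ graphMu G :=
  le_csSup (Module.End.finite_hasEigenvalue _).bddAbove hμ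

theorem Matrix.hasEigenvalue_toLin'_of_mulVec_eq {R ι : Type*} [CommRing R] [Fintype ι]
    [DecidableEq ι] {A : Matrix ι ι R} {v : ι → R} {μ : R} (hv : v ≠ 0) (hAv : A *ᵥ v = μ • v) :
    Module.End.HasEigenvalue (toLin' A) μ :=
  Module.End.hasEigenvalue_of_hasEigenvector
    ⟨Module.End.mem_eigenspace_iff.mpr (by rwa [toLin'_apply]), hv⟩

theorem Finset.card_pair_apply {V : Type*} [DecidableEq V] (f : V → V) (u : V) :
    #{u, f u} = if f u = u then 1 else 2 := by
  split_ifs with h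
  · simp [h]
  · exact card_pair (Ne.symm h)

namespace SimpleGraph

variable {V : Type*} [Fintype V] [DecidableEq V] {G : SimpleGraph V} [DecidableRel G.Adj]
  {f : V → V}

theorem neighborFinset_eq_of_adj_iff (hG : ∀ u v, G.Adj u v ↔ u ≠ v ∧ f u ≠ v) (u : V) :
    G.neighborFinset u = univ \ {u, f u} := by
  ext w
  simp only [mem_neighborFinset, hG, mem_sdiff, mem_univ, mem_insert, mem_singleton, true_and,
    not_or]
  exact ⟨fun ⟨h₁, h₂⟩ => ⟨Ne.symm h₁, Ne.symm h₂⟩, fun ⟨h₁, h₂⟩ => ⟨Ne.symm h₁, Ne.symm h₂⟩⟩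

theorem degree_add_card_pair_of_adj_iff (hG : ∀ u v, G.Adj u v ↔ u ≠ v ∧ f u ≠ v) (u : V) :
    G.degree u + #{u, f u} = Fintype.card V := by
  rw [← card_neighborFinset_eq_degree, neighborFinset_eq_of_adj_iff hG,
    card_sdiff_add_card_eq_card (subset_univ _), card_univ]

theorem two_mul_card_edgeFinset_add_of_adj_iff (hG : ∀ u v, G.Adj u v ↔ u ≠ v ∧ f u ≠ v) :
    2 * #G.edgeFinset + 2 * Fintype.card V =
      Fintype.card V * Fintype.card V + #{u | f u = u} := by
  have hpairs : ∑ u, #{u, f u} + #{u | f u = u} = 2 * Fintype.card V := by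
    rw [card_filter, ← sum_add_distrib, ← card_univ, mul_comm, ← smul_eq_mul, ← sum_const]
    refine sum_congr rfl fun u _ => ?_
    rw [card_pair_apply]
    split_ifs <;> rfl
  have hdeg : ∑ u, G.degree u + ∑ u, #{u, f u} = Fintype.card V * Fintype.card V := by
    rw [← sum_add_distrib, Fintype.sum_congr _ _ (degree_add_card_pair_of_adj_iff hG), sum_const,
      card_univ, smul_eq_mul]
  rw [← sum_degrees_eq_twice_card_edges]
  omega

theorem adjMatrix_mulVec_apply_of_adj_iff {R : Type*} [Ring R]
    (hG : ∀ u v, G.Adj u v ↔ u ≠ v ∧ f u ≠ v) (x : V → R) (u : V) :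
    (G.adjMatrix R *ᵥ x) u = ∑ w, x w - ∑ w ∈ {u, f u}, x w := by
  rw [adjMatrix_mulVec_apply, neighborFinset_eq_of_adj_iff hG, sum_sdiff_eq_sub (subset_univ _)]

theorem hasEigenvalue_adjMatrix_of_adj_iff (hG : ∀ u v, G.Adj u v ↔ u ≠ v ∧ f u ≠ v)
    (hf : Function.Involutive f) (hfix : #{u | f u = u} = 2) (hV : 3 ≤ Fintype.card V)
    {μ : ℝ} (hμ : μ ^ 2 = (Fintype.card V - 3) * μ + Fintype.card V) :
    Module.End.HasEigenvalue (toLin' (G.adjMatrix ℝ)) μ := by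
  set n : ℝ := (Fintype.card V : ℝ) with hn
  set t : ℝ := (μ - n + 4) / 2
  set x : V → ℝ := fun u => if f u = u then t else 1
  have hmoved : (#{u | ¬f u = u} : ℝ) = n - 2 := by
    have := card_filter_add_card_filter_not (s := univ) (fun u => f u = u)
    rw [hfix, card_univ] at this
    rw [eq_sub_iff_add_eq, hn, ← this]
    push_cast
    ring
  have hsum : ∑ u, x u = 2 * t + (n - 2) := by
    rw [sum_ite, sum_const, sum_const, hfix, nsmul_eq_mul, nsmul_eq_mul, hmoved]
    push_cast
    ring
  have hx0 : x ≠ 0 := by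
    obtain ⟨u, hu⟩ : ({u | ¬f u = u} : Finset V).Nonempty := by
      rw [← card_pos, ← Nat.cast_pos (α := ℝ), hmoved]
      have : (3 : ℝ) ≤ n := by rw [hn]; exact_mod_cast hV
      linarith
    have hu : ¬f u = u := (mem_filter.mp hu).2
    exact fun h => by simpa [x, hu] using congrFun h u
  refine hasEigenvalue_toLin'_of_mulVec_eq hx0 (funext fun u => ?_)
  rw [adjMatrix_mulVec_apply_of_adj_iff hG, hsum, Pi.smul_apply, smul_eq_mul]
  by_cases hu : f u = u
  · simp only [hu, pair_eq_singleton, sum_singleton, x, if_true]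
    linear_combination (-1 / 2 : ℝ) * hμ
  · have hfu : f (f u) ≠ f u := fun h => hu (by simpa [hf u] using congrArg f h)
    rw [sum_pair (Ne.symm hu)]
    simp only [x, hu, hfu, if_false]
    ring

end SimpleGraph

noncomputable def complementMatchingRoot (n : ℝ) : ℝ := (n - 3 + √((n - 3) ^ 2 + 4 * n)) / 2

theorem complementMatchingRoot_sq {n : ℝ} (hn : 0 ≤ n) :
    complementMatchingRoot n ^ 2 = (n - 3) * complementMatchingRoot n + n := by
  have hs := Real.sq_sqrt (by positivity : 0 ≤ (n - 3) ^ 2 + 4 * n)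
  unfold complementMatchingRoot
  linear_combination hs / 4

theorem one_div_lt_complementMatchingRoot_sub {n : ℝ} (hn : 4 ≤ n) :
    1 / (n ^ 2 + 2) < complementMatchingRoot n - (n ^ 2 - 2 * n + 2) / n := by
  -- the inequality solved for the square root
  have hs : (n ^ 4 - n ^ 3 + 6 * n ^ 2 + 8) / (n ^ 3 + 2 * n) < √((n - 3) ^ 2 + 4 * n) := by
    have hn0 : 0 ≤ n := by linarith
    have hnum : 0 ≤ n ^ 4 - n ^ 3 + 6 * n ^ 2 + 8 := by
      nlinarith [mul_nonneg (pow_nonneg hn0 3) (by linarith : 0 ≤ n - 1)]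
    rw [Real.lt_sqrt (div_nonneg hnum (by positivity)), div_pow, div_lt_iff₀ (by positivity)]
    nlinarith [sq_nonneg n, sq_nonneg (n - 4), sq_nonneg (n ^ 2 - 4 * n)]
  rw [div_lt_iff₀ (by positivity)] at hs
  unfold complementMatchingRoot
  rw [div_sub_div _ _ two_ne_zero (by positivity), div_lt_div_iff₀ (by positivity) (by positivity)]
  nlinarith

theorem complement_matching_gap {k : ℕ} (hk : 2 ≤ k) (G : SimpleGraph (Fin (2 * k)))
    [DecidableRel G.Adj] (f : Fin (2 * k) → Fin (2 * k)) (a b : Fin (2 * k))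
    (hab : a ≠ b) (hfa : f a = a) (hfb : f b = b)
    (hinv : ∀ x, f (f x) = x) (hfree : ∀ x, x ≠ a → x ≠ b → f x ≠ x)
    (hG : ∀ u v : Fin (2 * k), G.Adj u v ↔ (u ≠ v ∧ f u ≠ v)) :
    graphMu G - 2 * (G.edgeFinset.card : ℝ) / (2 * k) >
      1 / (2 * (G.edgeFinset.card : ℝ) + 2 * (2 * k)) := by
  have hfix : #{u | f u = u} = 2 := by
    convert card_pair hab
    ext u
    simp only [mem_filter, mem_univ, true_and, mem_insert, mem_singleton]
    refine ⟨fun h => ?_, by rintro (rfl | rfl) <;> assumption⟩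
    by_contra! hne
    exact hfree u hne.1 hne.2 h
  have hedges := SimpleGraph.two_mul_card_edgeFinset_add_of_adj_iff hG
  rw [hfix, Fintype.card_fin] at hedges
  have hroot := complementMatchingRoot_sq (n := 2 * k) (by positivity)
  have hμ := le_graphMu_of_hasEigenvalue <| SimpleGraph.hasEigenvalue_adjMatrix_of_adj_iff hG hinv
    hfix (by rw [Fintype.card_fin]; omega)
    (by simpa only [Fintype.card_fin, Nat.cast_mul, Nat.cast_ofNat] using hroot)
  have hgap := one_div_lt_complementMatchingRoot_sub (n := 2 * k) (by norm_cast; omega)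
  have hm : (2 * #G.edgeFinset : ℝ) = (2 * k) ^ 2 - 2 * (2 * k) + 2 := by
    have := congrArg (Nat.cast (R := ℝ)) hedges
    push_cast at this
    linarith
  rw [hm]
  calc 1 / ((2 * k : ℝ) ^ 2 - 2 * (2 * k) + 2 + 2 * (2 * k)) = 1 / ((2 * k) ^ 2 + 2) := by ring_nf
    _ < _ := hgap
    _ ≤ _ := by linarith
end
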